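/- arXiv:1410.7472 — 3 statements merged into one kernel-verified Lean document; each statement's English description precedes it below -/
import Mathlib

section
/- Every ω-chain 𝓔₁ ⊴ 𝓔₂ ⊴ … of event structures has a least upper bound with respect to ⊴, given by the componentwise union ⟨⋃ᵢ Eᵢ, ⋃ᵢ #ᵢ, ⋃ᵢ ⊢ᵢ, ⋃ᵢ ℓᵢ⟩, and this componentwise union is itself an event structure (conflict irreflexive and symmetric, enabling saturated). -/
namespace ESC

/-- Labelled event structure data: events, conflict, enabling, labelling (relational). -/
structure LES (Ev Act : Type) where
  events : Set Ev
  conf : Ev → Ev → Prop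
  enab : Set Ev → Ev → Prop
  lab : Ev → Act → Prop

/-- Conflict-freeness of a set of events. -/
def CF {Ev : Type} (C : Ev → Ev → Prop) (X : Set Ev) : Prop :=
  ∀ e ∈ X, ∀ e' ∈ X, ¬ C e e'

/-- Well-formedness: irreflexive symmetric conflict, saturated enabling over
finite conflict-free subsets, labelling a (partial) function on events. -/
structure IsES {Ev Act : Type} (E : LES Ev Act) : Prop where
  conf_mem : ∀ e e', E.conf e e' → e ∈ E.events ∧ e' ∈ E.events
  conf_irrefl : ∀ e, ¬ E.conf e e
  conf_symm : ∀ e e', E.conf e e' → E.conf e' e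
  enab_dom : ∀ X e, E.enab X e → X ⊆ E.events ∧ e ∈ E.events ∧ X.Finite ∧ CF E.conf X
  saturated : ∀ X Y e, E.enab X e → X ⊆ Y → Y ⊆ E.events → Y.Finite → CF E.conf Y → E.enab Y e
  lab_dom : ∀ e a, E.lab e a → e ∈ E.events
  lab_fun : ∀ e a b, E.lab e a → E.lab e b → a = b
  lab_total : ∀ e ∈ E.events, ∃ a, E.lab e a

/-- The order ⊴ on event structures. -/
def leES {Ev Act : Type} (E E' : LES Ev Act) : Prop :=
  E.events ⊆ E'.events ∧
  (∀ e e', E.conf e e' → E'.conf e e') ∧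
  (∀ X e, E.enab X e → E'.enab X e) ∧
  (∀ e ∈ E.events, ∀ a, E.lab e a ↔ E'.lab e a) ∧
  (∀ e e', e ∈ E.events → e' ∈ E.events → E'.conf e e' → E.conf e e') ∧
  (∀ X e, X ⊆ E.events → e ∈ E.events → E'.enab X e → E.enab X e)

/-- The empty event structure. -/
def emptyES {Ev Act : Type} : LES Ev Act :=
  ⟨∅, fun _ _ => False, fun _ _ => False, fun _ _ => False⟩

/-- Componentwise union of a countable family of event structures. -/
def unionES {Ev Act : Type} (c : ℕ → LES Ev Act) : LES Ev Act :=
  ⟨⋃ n, (c n).events,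
   fun e e' => ∃ n, (c n).conf e e',
   fun X e => ∃ n, (c n).enab X e,
   fun e a => ∃ n, (c n).lab e a⟩

/-- Least fixed point (Kleene iteration from the empty ES). -/
def fixES {Ev Act : Type} (F : LES Ev Act → LES Ev Act) : LES Ev Act :=
  unionES (fun n => F^[n] emptyES)

/-- Events surviving after executing `e`. -/
def remEvents {Ev Act : Type} (E : LES Ev Act) (e : Ev) : Set Ev :=
  E.events \ ({e} ∪ {e' | E.conf e e'})

/-- Remainder `E[e]` of an event structure after executing `e`. -/
def remainder {Ev Act : Type} (E : LES Ev Act) (e : Ev) : LES Ev Act where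
  events := remEvents E e
  conf := fun e1 e2 => E.conf e1 e2 ∧ e1 ∈ remEvents E e ∧ e2 ∈ remEvents E e
  enab := fun X e' => ∃ Y, E.enab Y e' ∧ e' ≠ e ∧ ¬ E.conf e' e ∧ CF E.conf (Y ∪ {e}) ∧ X = Y \ {e}
  lab := fun e' a => E.lab e' a ∧ e' ∈ remEvents E e

/-- Finite plays (as lists), via iterated remainders. -/
def isPlayL {Ev Act : Type} : LES Ev Act → List Ev → Prop
  | _, [] => True
  | E, e :: σ => E.enab ∅ e ∧ isPlayL (remainder E e) σ

/-- The set of events occurring among the first `i` positions of `σ`. -/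
def prefixSet {Ev : Type} (σ : ℕ → Option Ev) (i : ℕ) : Set Ev :=
  {e | ∃ j, j < i ∧ σ j = some e}

/-- The list of the first `i` events of `σ`. -/
def prefixList {Ev : Type} (σ : ℕ → Option Ev) : ℕ → List Ev
  | 0 => []
  | i + 1 => prefixList σ i ++ (σ i).toList

/-- The remainder of `E` after the first `i` events of `σ`. -/
def remAfter {Ev Act : Type} (E : LES Ev Act) (σ : ℕ → Option Ev) : ℕ → LES Ev Act
  | 0 => E
  | i + 1 =>
    match σ i with
    | none => remAfter E σ i
    | some e => remainder (remAfter E σ i) e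

/-- Plays, possibly infinite: `σ i = none` means the play has ended before `i`. -/
def IsPlay {Ev Act : Type} (E : LES Ev Act) (σ : ℕ → Option Ev) : Prop :=
  (∀ i j, i ≤ j → σ i = none → σ j = none) ∧
  (∀ i e, σ i = some e → (remAfter E σ i).enab ∅ e)

/-- Innocence of participant `A` in the play `σ`. -/
def Innocent {Ev Act Ppt : Type} (π : Ev → Ppt) (E : LES Ev Act) (A : Ppt)
    (σ : ℕ → Option Ev) : Prop :=
  ∀ i e, π e = A → E.enab (prefixSet σ i) e →
    ∃ j, i ≤ j ∧ ∃ e', σ j = some e' ∧ (E.conf e' e ∨ e' = e)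

/-- Strategies for `A`: map finite plays to sets of `A`'s events extending the play. -/
def IsStrategy {Ev Act Ppt : Type} (π : Ev → Ppt) (E : LES Ev Act) (A : Ppt)
    (S : List Ev → Set Ev) : Prop :=
  ∀ σ, isPlayL E σ → ∀ e ∈ S σ, π e = A ∧ isPlayL E (σ ++ [e])

/-- `σ` conforms to strategy `S` for participant `A`. -/
def Conforms {Ev Ppt : Type} (π : Ev → Ppt) (A : Ppt) (S : List Ev → Set Ev)
    (σ : ℕ → Option Ev) : Prop :=
  ∀ i e, σ i = some e → π e = A → e ∈ S (prefixList σ i)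

/-- Position `j` is within the play `σ`. -/
def validPos {Ev : Type} (σ : ℕ → Option Ev) (j : ℕ) : Prop :=
  ∀ k, k < j → σ k ≠ none

/-- Fairness of `σ` w.r.t. strategy `S`: permanently prescribed events happen. -/
def FairW {Ev : Type} (S : List Ev → Set Ev) (σ : ℕ → Option Ev) : Prop :=
  ∀ i e, validPos σ i →
    (∀ j, i ≤ j → validPos σ j → e ∈ S (prefixList σ j)) →
    ∃ h, i ≤ h ∧ σ h = some e

/-- A contract: a labelled ES plus a partial payoff assignment. -/
structure Contract (Ev Act Ppt : Type) where
  es : LES Ev Act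
  payoff : Ppt → Option (Set (ℕ → Option Ev))

/-- Winning plays of `A`. -/
def Wins {Ev Act Ppt : Type} (π : Ev → Ppt) (C : Contract Ev Act Ppt) (A : Ppt)
    (σ : ℕ → Option Ev) : Prop :=
  (∃ S, C.payoff A = some S ∧ σ ∈ S ∧ ∀ B : Ppt, Innocent π C.es B σ) ∨
  (Innocent π C.es A σ ∧ ∃ B : Ppt, B ≠ A ∧ ¬ Innocent π C.es B σ)

/-- `S` is a winning strategy for `A` in `C`. -/
def WinningFor {Ev Act Ppt : Type} (π : Ev → Ppt) (C : Contract Ev Act Ppt) (A : Ppt)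
    (S : List Ev → Set Ev) : Prop :=
  IsStrategy π C.es A S ∧
  ∀ σ, IsPlay C.es σ → Conforms π A S σ → FairW S σ → Wins π C A σ

/-- The eager strategy of `A`: do all currently enabled events of `A`. -/
def eager {Ev Act Ppt : Type} (π : Ev → Ppt) (E : LES Ev Act) (A : Ppt)
    (σ : List Ev) : Set Ev :=
  {e | π e = A ∧ E.enab {x | x ∈ σ} e}

/-- Composability of contracts: payoff domains are disjoint. -/
def Composable {Ev Act Ppt : Type} (C C' : Contract Ev Act Ppt) : Prop :=
  ∀ A : Ppt, C.payoff A = none ∨ C'.payoff A = none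

/-- Plain (componentwise-union) composition of contracts. -/
def ccompU {Ev Act Ppt : Type} (C C' : Contract Ev Act Ppt) : Contract Ev Act Ppt :=
  ⟨⟨C.es.events ∪ C'.es.events,
    fun e e' => C.es.conf e e' ∨ C'.es.conf e e',
    fun X e => C.es.enab X e ∨ C'.es.enab X e,
    fun e a => C.es.lab e a ∨ C'.es.lab e a⟩,
   fun A => (C.payoff A).orElse (fun _ => C'.payoff A)⟩

/-! ### Binary session types -/

/-- Session types (binary choices encode finite non-empty choices), extended with
committed branches `comm`, one-position buffers `buf`, and the stuck state `zero`. -/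
inductive Proc (Act : Type) where
  | success : Proc Act
  | send : Act → Proc Act → Proc Act      -- ā.P as an internal branch
  | recv : Act → Proc Act → Proc Act      -- a.P as an external branch
  | ichoice : Proc Act → Proc Act → Proc Act  -- ⊕
  | echoice : Proc Act → Proc Act → Proc Act  -- +
  | var : ℕ → Proc Act                    -- de Bruijn variable
  | recur : Proc Act → Proc Act             -- rec x.P
  | comm : Act → Proc Act → Proc Act      -- committed internal branch ā.P
  | buf : Act → Proc Act → Proc Act       -- [ā]P
  | zero : Proc Act                       -- 0

/-- Branches of an internal choice. -/
inductive IBr {Act : Type} : Proc Act → Act → Proc Act → Prop where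
  | send {a P} : IBr (Proc.send a P) a P
  | il {P Q a R} : IBr P a R → IBr (Proc.ichoice P Q) a R
  | ir {P Q a R} : IBr Q a R → IBr (Proc.ichoice P Q) a R

/-- Branches of an external choice. -/
inductive EBr {Act : Type} : Proc Act → Act → Proc Act → Prop where
  | recv {a P} : EBr (Proc.recv a P) a P
  | el {P Q a R} : EBr P a R → EBr (Proc.echoice P Q) a R
  | er {P Q a R} : EBr Q a R → EBr (Proc.echoice P Q) a R

/-- Substitution of `Q` for de Bruijn variable `k`. -/
def subst {Act : Type} (Q : Proc Act) : ℕ → Proc Act → Proc Act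
  | _, .success => .success
  | k, .send a P => .send a (subst Q k P)
  | k, .recv a P => .recv a (subst Q k P)
  | k, .ichoice P1 P2 => .ichoice (subst Q k P1) (subst Q k P2)
  | k, .echoice P1 P2 => .echoice (subst Q k P1) (subst Q k P2)
  | k, .var m => if m = k then Q else .var m
  | k, .recur P => .recur (subst Q (k+1) P)
  | k, .comm a P => .comm a (subst Q k P)
  | k, .buf a P => .buf a (subst Q k P)
  | _, .zero => .zero

/-- Standard (reduction) semantics of compositions `P ∥ Q`. -/
inductive Step {Act : Type} : Proc Act × Proc Act → Proc Act × Proc Act → Prop where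
  | commitL {P P' Q : Proc Act} {a : Act} : IBr P a P' → Step (P, Q) (Proc.comm a P', Q)
  | commitR {P Q Q' : Proc Act} {a : Act} : IBr Q a Q' → Step (P, Q) (P, Proc.comm a Q')
  | unfoldL {P Q : Proc Act} : Step (Proc.recur P, Q) (subst (Proc.recur P) 0 P, Q)
  | unfoldR {P Q : Proc Act} : Step (P, Proc.recur Q) (P, subst (Proc.recur Q) 0 Q)
  | syncL {P Q Q' : Proc Act} {a : Act} : EBr Q a Q' → Step (Proc.comm a P, Q) (P, Q')
  | syncR {P P' Q : Proc Act} {a : Act} : EBr P a P' → Step (P, Proc.comm a Q) (P', Q)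

/-- A stuck configuration. -/
def Stuck {Act : Type} (c : Proc Act × Proc Act) : Prop := ∀ c', ¬ Step c c'

/-- Compliance: every reachable stuck configuration has the client succeeded. -/
def Compliant {Act : Type} (P Q : Proc Act) : Prop :=
  ∀ c, Relation.ReflTransGen Step (P, Q) c → Stuck c → c.1 = Proc.success

/-- Well-formed session types: `WF n U P` means free variables are `< n` and
variables satisfying `¬ U` may only occur guarded (under a prefix). -/
inductive WF {Act : Type} : ℕ → (ℕ → Prop) → Proc Act → Prop where
  | success {n U} : WF n U (Proc.success : Proc Act)
  | send {n U} {a : Act} {P} : WF n (fun _ => True) P → WF n U (Proc.send a P)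
  | recv {n U} {a : Act} {P} : WF n (fun _ => True) P → WF n U (Proc.recv a P)
  | ichoice {n U} {P Q : Proc Act} : WF n U P → WF n U Q → WF n U (Proc.ichoice P Q)
  | echoice {n U} {P Q : Proc Act} : WF n U P → WF n U Q → WF n U (Proc.echoice P Q)
  | var {n U m} : m < n → U m → WF n U (Proc.var m : Proc Act)
  | recur {n U} {P : Proc Act} : WF (n+1) (fun k => ∃ j, k = j + 1 ∧ U j) P → WF n U (Proc.recur P)

/-- Closed, guarded session types. -/
def WF0 {Act : Type} (P : Proc Act) : Prop := WF 0 (fun _ => False) P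

/-- Labels of the event structures and of the turn-based semantics:
inputs `a`, outputs `ā`, and the success label ✓. -/
inductive Lbl (Act : Type) where
  | inp : Act → Lbl Act
  | out : Act → Lbl Act
  | tick : Lbl Act

/-- Turn-based labelled semantics with one-position buffers (recursion unfolded tacitly). -/
inductive TStep {Act : Type} : Proc Act × Proc Act → Lbl Act → Proc Act × Proc Act → Prop where
  | outL {P P' R : Proc Act} {a : Act} : IBr P a P' → TStep (P, R) (Lbl.out a) (Proc.buf a P', R)
  | outR {P R R' : Proc Act} {a : Act} : IBr R a R' → TStep (P, R) (Lbl.out a) (P, Proc.buf a R')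
  | inL {P P' R : Proc Act} {a : Act} : EBr P a P' → TStep (P, Proc.buf a R) (Lbl.inp a) (P', R)
  | inR {P R R' : Proc Act} {a : Act} : EBr R a R' → TStep (Proc.buf a P, R) (Lbl.inp a) (P, R')
  | tickL {P : Proc Act} : TStep (Proc.success, P) Lbl.tick (Proc.zero, P)
  | tickR {P : Proc Act} : TStep (P, Proc.success) Lbl.tick (P, Proc.zero)
  | unfL {P Q c l} : TStep (subst (Proc.recur P) 0 P, Q) l c → TStep (Proc.recur P, Q) l c
  | unfR {P Q c l} : TStep (P, subst (Proc.recur Q) 0 Q) l c → TStep (P, Proc.recur Q) l c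

/-! ### ES denotation of session types -/

/-- Canonical event renaming used for freshness: prepend `n` to the path. -/
def shiftE {Ppt : Type} (n : ℕ) : Ppt × List ℕ → Ppt × List ℕ := fun e => (e.1, n :: e.2)

/-- Rename all events of `E` by `shiftE n`. -/
def shiftES {Ppt Act : Type} (n : ℕ) (E : LES (Ppt × List ℕ) Act) : LES (Ppt × List ℕ) Act :=
  ⟨shiftE n '' E.events,
   fun e e' => ∃ d d', e = shiftE n d ∧ e' = shiftE n d' ∧ E.conf d d',
   fun X e => ∃ Y d, X = shiftE n '' Y ∧ e = shiftE n d ∧ E.enab Y d,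
   fun e a => ∃ d, e = shiftE n d ∧ E.lab d a⟩

/-- Prefixing with a fresh event `ea` labelled `α`. -/
def prefixES {Ev Act : Type} (ea : Ev) (α : Act) (E : LES Ev Act) : LES Ev Act :=
  ⟨insert ea E.events, E.conf,
   fun X e => (X = ∅ ∧ e = ea) ∨ ∃ Y, E.enab Y e ∧ X = insert ea Y,
   fun e a => (e = ea ∧ a = α) ∨ E.lab e a⟩

/-- Choice: disjoint union with initial events of different branches in conflict. -/
def choiceES {Ev Act : Type} (E1 E2 : LES Ev Act) : LES Ev Act :=
  ⟨E1.events ∪ E2.events,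
   fun e e' => E1.conf e e' ∨ E2.conf e e' ∨
     (E1.enab ∅ e ∧ E2.enab ∅ e') ∨ (E2.enab ∅ e ∧ E1.enab ∅ e'),
   fun X e => E1.enab X e ∨ E2.enab X e,
   fun e a => E1.lab e a ∨ E2.lab e a⟩

/-- Denotation of ✓: a single ✓-labelled enabled event of `A`. -/
def successES {Ppt Act : Type} (A : Ppt) : LES (Ppt × List ℕ) (Lbl Act) :=
  ⟨{(A, ([] : List ℕ))}, fun _ _ => False,
   fun X e => X = ∅ ∧ e = (A, []),
   fun e l => e = (A, []) ∧ l = Lbl.tick⟩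

/-- Extend an environment with a new denotation for variable 0. -/
def consEnv {Ev Act : Type} (E : LES Ev Act) (ρ : ℕ → LES Ev Act) : ℕ → LES Ev Act
  | 0 => E
  | k + 1 => ρ k

/-- ES denotation `⟦P⟧_A ρ` of a session type, all events owned by `A`. -/
def semST {Act Ppt : Type} (A : Ppt) :
    (ℕ → LES (Ppt × List ℕ) (Lbl Act)) → Proc Act → LES (Ppt × List ℕ) (Lbl Act)
  | _, .success => successES A
  | ρ, .send a P => prefixES (A, []) (Lbl.out a) (shiftES 0 (semST A ρ P))
  | ρ, .recv a P => prefixES (A, []) (Lbl.inp a) (shiftES 0 (semST A ρ P))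
  | ρ, .ichoice P Q => choiceES (shiftES 0 (semST A ρ P)) (shiftES 1 (semST A ρ Q))
  | ρ, .echoice P Q => choiceES (shiftES 0 (semST A ρ P)) (shiftES 1 (semST A ρ Q))
  | ρ, .var m => ρ m
  | ρ, .recur P => fixES (fun E => semST A (consEnv E ρ) P)
  | _, .comm _ _ => emptyES
  | _, .buf _ _ => emptyES
  | _, .zero => emptyES

/-- The complementary label. -/
def coLbl {Act : Type} : Lbl Act → Lbl Act
  | .inp a => .out a
  | .out a => .inp a
  | .tick => .tick

/-- Co-actions (outputs and ✓). -/
def isCo {Act : Type} : Lbl Act → Prop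
  | .inp _ => False
  | _ => True

/-- `e'` (in `Ei`) is matched by the synchronizing event `e''` (in `Ej`). -/
def LabMatch {Ev Act : Type} (Ei Ej : LES Ev (Lbl Act)) (e' e'' : Ev) : Prop :=
  ∃ l, Ei.lab e' l ∧ Ej.lab e'' (coLbl l)

/-- Composed enabling for a co-action event of side `i`. -/
def parEnabCo {Ev Act : Type} (Ei Ej : LES Ev (Lbl Act)) (Z : Set Ev) (e : Ev) : Prop :=
  ∃ X Y, Ei.enab X e ∧ (∃ l, Ei.lab e l ∧ isCo l) ∧ Y ⊆ Ej.events ∧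
    (∀ e' ∈ X, ∃ e'' ∈ Y, LabMatch Ei Ej e' e'') ∧ Z = X ∪ Y

/-- Composed enabling for an input event of side `i` (needs its own co-event `eh`). -/
def parEnabIn {Ev Act : Type} (Ei Ej : LES Ev (Lbl Act)) (Z : Set Ev) (e : Ev) : Prop :=
  ∃ X Y eh a, Ei.enab X e ∧ Ei.lab e (Lbl.inp a) ∧ Y ⊆ Ej.events ∧
    eh ∈ Ej.events ∧ Ej.lab eh (Lbl.out a) ∧
    (∀ e' ∈ X, ∃ e'' ∈ Y, LabMatch Ei Ej e' e'') ∧ Z = X ∪ Y ∪ {eh}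

/-- ES denotation of a composition `P₁ ∥ P₂`, given the two sides. -/
def parES {Ev Act : Type} (E1 E2 : LES Ev (Lbl Act)) : LES Ev (Lbl Act) :=
  ⟨E1.events ∪ E2.events,
   fun e e' => E1.conf e e' ∨ E2.conf e e',
   fun Z e => parEnabCo E1 E2 Z e ∨ parEnabCo E2 E1 Z e ∨
              parEnabIn E1 E2 Z e ∨ parEnabIn E2 E1 Z e,
   fun e l => E1.lab e l ∨ E2.lab e l⟩

/-- Transitions of the LTS `ETS(E)`: fire an `∅`-enabled event, pass to the remainder. -/
def ETStep {Ev Act : Type} (E : LES Ev Act) (l : Act) (E' : LES Ev Act) : Prop :=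
  ∃ e, E.enab ∅ e ∧ E.lab e l ∧ E' = remainder E e

/-- Payoff of `A`: finite plays must contain a ✓-labelled event of `A`. -/
def payoffOf {Act Ppt : Type} (A : Ppt) (E : LES (Ppt × List ℕ) (Lbl Act)) :
    Set (ℕ → Option (Ppt × List ℕ)) :=
  {σ | (∃ i, σ i = none) → ∃ j e, σ j = some e ∧ e.1 = A ∧ E.lab e Lbl.tick}

/-- The contract `𝓒_A(P)` of a session type. -/
noncomputable def contractOf {Act Ppt : Type} [DecidableEq Ppt] (A : Ppt) (P : Proc Act) :
    Contract (Ppt × List ℕ) (Lbl Act) Ppt :=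
  ⟨semST A (fun _ => emptyES) P,
   fun X => if X = A then some (payoffOf A (semST A (fun _ => emptyES) P)) else none⟩

/-- Composition of (session-type) contracts: the game is played on the composed ES. -/
noncomputable def ccomp {Ev Act Ppt : Type} (C C' : Contract Ev (Lbl Act) Ppt) :
    Contract Ev (Lbl Act) Ppt :=
  ⟨parES C.es C'.es, fun X => (C.payoff X).orElse (fun _ => C'.payoff X)⟩

/-- Recursion-free (and variable-free) session types. -/
inductive NoRec {Act : Type} : Proc Act → Prop where
  | success : NoRec (Proc.success : Proc Act)
  | send {a : Act} {P} : NoRec P → NoRec (Proc.send a P)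
  | recv {a : Act} {P} : NoRec P → NoRec (Proc.recv a P)
  | ichoice {P Q : Proc Act} : NoRec P → NoRec Q → NoRec (Proc.ichoice P Q)
  | echoice {P Q : Proc Act} : NoRec P → NoRec Q → NoRec (Proc.echoice P Q)

end ESC

/-! Any two stages of a `⊴`-directed family lie below a common stage, whose reflection clauses
push conflict, enabling and labelling of the union down to each stage, so every stage sits below
the union. A finite set of events of the union already lies in a single stage; this gives saturation of the union, and, for an upper bound `U`, reflection of `U`'s
conflicts and enablings onto the union. -/

namespace ESC

section Order

variable {Ev Act : Type}

theorem leES_refl (E : LES Ev Act) : leES E E :=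
  ⟨subset_rfl, fun _ _ h => h, fun _ _ h => h, fun _ _ _ => Iff.rfl,
    fun _ _ _ _ h => h, fun _ _ _ _ h => h⟩

theorem leES_trans {E₁ E₂ E₃ : LES Ev Act} (h₁₂ : leES E₁ E₂) (h₂₃ : leES E₂ E₃) :
    leES E₁ E₃ := by
  obtain ⟨ev₁, conf₁, enab₁, lab₁, confRefl₁, enabRefl₁⟩ := h₁₂
  obtain ⟨ev₂, conf₂, enab₂, lab₂, confRefl₂, enabRefl₂⟩ := h₂₃
  exact ⟨ev₁.trans ev₂, fun e e' h => conf₂ e e' (conf₁ e e' h),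
    fun X e h => enab₂ X e (enab₁ X e h),
    fun e he a => (lab₁ e he a).trans (lab₂ e (ev₁ he) a),
    fun e e' he he' h => confRefl₁ e e' he he' (confRefl₂ e e' (ev₁ he) (ev₁ he') h),
    fun X e hX he h => enabRefl₁ X e hX he (enabRefl₂ X e (hX.trans ev₁) (ev₁ he) h)⟩

instance : Std.Refl (leES : LES Ev Act → LES Ev Act → Prop) := ⟨leES_refl⟩

instance : IsTrans (LES Ev Act) leES := ⟨fun _ _ _ => leES_trans⟩

theorem directed_leES_of_chain {c : ℕ → LES Ev Act} (hchain : ∀ n, leES (c n) (c (n + 1))) :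
    Directed leES c := fun m n =>
  ⟨max m n, Nat.rel_of_forall_rel_succ_of_le leES hchain (le_max_left m n),
    Nat.rel_of_forall_rel_succ_of_le leES hchain (le_max_right m n)⟩

end Order

section DirectedUnion

variable {Ev Act : Type} {c : ℕ → LES Ev Act}

theorem exists_subset_events_of_finite (hc : Directed leES c) {X : Set Ev} (hX : X.Finite)
    (hsub : X ⊆ (unionES c).events) : ∃ N, X ⊆ (c N).events := by
  have hdir : Directed (· ⊆ ·) fun n => (c n).events :=
    fun m n => (hc m n).imp fun _ h => ⟨h.1.1, h.2.1⟩
  obtain ⟨N, hN⟩ := hdir.exists_mem_subset_of_finset_subset_biUnion (s := hX.toFinset)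
    (by rwa [Set.Finite.coe_toFinset])
  exact ⟨N, by simpa using hN⟩

theorem unionES_conf_iff (hc : Directed leES c) {n : ℕ} {e e' : Ev}
    (he : e ∈ (c n).events) (he' : e' ∈ (c n).events) :
    (unionES c).conf e e' ↔ (c n).conf e e' := by
  refine ⟨fun ⟨m, hm⟩ => ?_, fun h => ⟨n, h⟩⟩
  obtain ⟨k, hmk, hnk⟩ := hc m n
  exact hnk.2.2.2.2.1 e e' he he' (hmk.2.1 e e' hm)

theorem unionES_enab_iff (hc : Directed leES c) {n : ℕ} {X : Set Ev} {e : Ev}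
    (hX : X ⊆ (c n).events) (he : e ∈ (c n).events) :
    (unionES c).enab X e ↔ (c n).enab X e := by
  refine ⟨fun ⟨m, hm⟩ => ?_, fun h => ⟨n, h⟩⟩
  obtain ⟨k, hmk, hnk⟩ := hc m n
  exact hnk.2.2.2.2.2 X e hX he (hmk.2.2.1 X e hm)

theorem unionES_lab_iff (hES : ∀ n, IsES (c n)) (hc : Directed leES c) {n : ℕ} {e : Ev}
    {a : Act} (he : e ∈ (c n).events) : (unionES c).lab e a ↔ (c n).lab e a := by
  refine ⟨fun ⟨m, hm⟩ => ?_, fun h => ⟨n, h⟩⟩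
  obtain ⟨k, hmk, hnk⟩ := hc m n
  exact (hnk.2.2.2.1 e he a).2 ((hmk.2.2.2.1 e ((hES m).lab_dom e a hm) a).1 hm)

theorem leES_unionES (hES : ∀ n, IsES (c n)) (hc : Directed leES c) (n : ℕ) :
    leES (c n) (unionES c) :=
  ⟨Set.subset_iUnion (fun k => (c k).events) n, fun _ _ h => ⟨n, h⟩, fun _ _ h => ⟨n, h⟩,
    fun _ he _ => (unionES_lab_iff hES hc he).symm,
    fun _ _ he he' => (unionES_conf_iff hc he he').1,
    fun _ _ hX he => (unionES_enab_iff hc hX he).1⟩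

theorem isES_unionES (hES : ∀ n, IsES (c n)) (hc : Directed leES c) : IsES (unionES c) where
  conf_mem := by
    rintro e e' ⟨n, h⟩
    obtain ⟨he, he'⟩ := (hES n).conf_mem e e' h
    exact ⟨Set.mem_iUnion_of_mem n he, Set.mem_iUnion_of_mem n he'⟩
  conf_irrefl := by
    rintro e ⟨n, h⟩
    exact (hES n).conf_irrefl e h
  conf_symm := by
    rintro e e' ⟨n, h⟩
    exact ⟨n, (hES n).conf_symm e e' h⟩
  enab_dom := by
    rintro X e ⟨n, h⟩
    obtain ⟨hX, he, hfin, hcf⟩ := (hES n).enab_dom X e h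
    exact ⟨hX.trans (leES_unionES hES hc n).1, Set.mem_iUnion_of_mem n he, hfin,
      fun x hx y hy hxy => hcf x hx y hy ((unionES_conf_iff hc (hX hx) (hX hy)).1 hxy)⟩
  saturated := by
    rintro X Y e ⟨n, h⟩ hXY hY hfin hcf
    obtain ⟨N, hN⟩ := exists_subset_events_of_finite hc hfin hY
    obtain ⟨k, hnk, hNk⟩ := hc n N
    have hYk : Y ⊆ (c k).events := hN.trans hNk.1
    exact ⟨k, (hES k).saturated X Y e (hnk.2.2.1 X e h) hXY hYk hfin
      fun x hx y hy hxy => hcf x hx y hy ⟨k, hxy⟩⟩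
  lab_dom := by
    rintro e a ⟨n, h⟩
    exact Set.mem_iUnion_of_mem n ((hES n).lab_dom e a h)
  lab_fun := by
    rintro e a b ⟨n, ha⟩ hb
    exact (hES n).lab_fun e a b ha ((unionES_lab_iff hES hc ((hES n).lab_dom e a ha)).1 hb)
  lab_total := by
    intro e he
    obtain ⟨n, hn⟩ := Set.mem_iUnion.1 he
    obtain ⟨a, ha⟩ := (hES n).lab_total e hn
    exact ⟨a, n, ha⟩

theorem unionES_leES (hES : ∀ n, IsES (c n)) (hc : Directed leES c) {U : LES Ev Act}
    (hU : IsES U) (hcU : ∀ n, leES (c n) U) : leES (unionES c) U := by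
  refine ⟨Set.iUnion_subset fun n => (hcU n).1, fun e e' ⟨n, h⟩ => (hcU n).2.1 e e' h,
    fun X e ⟨n, h⟩ => (hcU n).2.2.1 X e h, fun e he a => ?_,
    fun e e' he he' h => ?_, fun X e hX he h => ?_⟩
  · obtain ⟨n, hn⟩ := Set.mem_iUnion.1 he
    exact (unionES_lab_iff hES hc hn).trans ((hcU n).2.2.2.1 e hn a)
  · obtain ⟨N, hN⟩ := exists_subset_events_of_finite hc (Set.toFinite {e, e'})
      (Set.insert_subset he (Set.singleton_subset_iff.2 he'))
    have heN : e ∈ (c N).events := hN (Set.mem_insert e _)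
    have he'N : e' ∈ (c N).events := hN (Set.mem_insert_of_mem e rfl)
    exact (unionES_conf_iff hc heN he'N).2 ((hcU N).2.2.2.2.1 e e' heN he'N h)
  · obtain ⟨N, hN⟩ := exists_subset_events_of_finite hc
      ((hU.enab_dom X e h).2.2.1.insert e) (Set.insert_subset he hX)
    have heN : e ∈ (c N).events := hN (Set.mem_insert e X)
    have hXN : X ⊆ (c N).events := (Set.subset_insert e X).trans hN
    exact (unionES_enab_iff hc hXN heN).2 ((hcU N).2.2.2.2.2 X e hXN heN h)

end DirectedUnion

/-- Every ω-chain of event structures has the componentwise union as least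
upper bound w.r.t. ⊴, and this union is itself an event structure. -/
theorem unionES_lub {Ev Act : Type} (c : ℕ → LES Ev Act)
    (hES : ∀ n, IsES (c n)) (hchain : ∀ n, leES (c n) (c (n + 1))) :
    IsES (unionES c) ∧
    (∀ n, leES (c n) (unionES c)) ∧
    (∀ U : LES Ev Act, IsES U → (∀ n, leES (c n) U) → leES (unionES c) U) := by
  have hc := directed_leES_of_chain hchain
  exact ⟨isES_unionES hES hc, leES_unionES hES hc,
    fun _ hU hcU => unionES_leES hES hc hU hcU⟩

end ESC
end

section
/- Every play that conforms to the eager strategy Σ_A of participant A is a play in which A is innocent, provided the play is fair with respect to Σ_A. That is, if σ is a fair play conforming to the eager strategy Σ_A(σ') = {e ∈ π⁻¹(A) : the set of events of σ' enables e}, then A is innocent in σ. -/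
/-!
An event of `A` enabled by a prefix of a play stays enabled by every longer prefix: enabling is
saturated, and the events of a play form a finite conflict-free set of events, since executing an
event discards everything in conflict with it. So the eager strategy prescribes the event
permanently and fairness makes it happen. If the play ended before the prefix, fairness applied at
its end point yields the same event at a position where nothing happens, which is absurd.
-/

namespace ESC

variable {Ev Act : Type}

section Prefix

variable (σ : ℕ → Option Ev)

lemma prefixSet_succ (i : ℕ) : prefixSet σ (i + 1) = prefixSet σ i ∪ {e | σ i = some e} := by
  ext e
  simp only [prefixSet, Set.mem_union, Set.mem_ofPred_eq, Nat.lt_succ_iff_lt_or_eq,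
    or_and_right, exists_or, exists_eq_left]

lemma prefixSet_eq_setOf_mem_prefixList (i : ℕ) :
    prefixSet σ i = {e | e ∈ prefixList σ i} := by
  induction i with
  | zero => ext e; simp [prefixSet, prefixList]
  | succ i ih =>
    rw [prefixSet_succ, ih]
    ext e
    simp [prefixList, Option.mem_toList]

lemma prefixSet_finite (i : ℕ) : (prefixSet σ i).Finite := by
  rw [prefixSet_eq_setOf_mem_prefixList]
  exact List.finite_toSet _

lemma prefixSet_mono : Monotone (prefixSet σ) :=
  fun _ _ hij _ ⟨k, hk, hσk⟩ => ⟨k, hk.trans_le hij, hσk⟩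

end Prefix

section Remainder

variable {E : LES Ev Act}

lemma remainder_conf_symm (hsymm : ∀ a b, E.conf a b → E.conf b a) (e : Ev) :
    ∀ a b, (remainder E e).conf a b → (remainder E e).conf b a :=
  fun a b ⟨hab, ha, hb⟩ => ⟨hsymm a b hab, hb, ha⟩

lemma remainder_mem_of_enab (hsymm : ∀ a b, E.conf a b → E.conf b a)
    (hmem : ∀ X a, E.enab X a → a ∈ E.events) {e a : Ev} {X : Set Ev}
    (h : (remainder E e).enab X a) : a ∈ (remainder E e).events := by
  obtain ⟨Y, hY, hae, hnconf, -, -⟩ := h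
  refine ⟨hmem Y a hY, ?_⟩
  rintro (rfl | hea)
  · exact hae rfl
  · exact hnconf (hsymm e a hea)

end Remainder

section RemAfter

variable {E : LES Ev Act} {σ : ℕ → Option Ev}

lemma remAfter_succ_of_none {i : ℕ} (h : σ i = none) :
    remAfter E σ (i + 1) = remAfter E σ i := by
  simp [remAfter, h]

lemma remAfter_succ_of_some {i : ℕ} {e : Ev} (h : σ i = some e) :
    remAfter E σ (i + 1) = remainder (remAfter E σ i) e := by
  simp [remAfter, h]

lemma remAfter_events_antitone : Antitone fun i => (remAfter E σ i).events := by
  refine antitone_nat_of_succ_le fun i => ?_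
  cases hσi : σ i with
  | none => rw [remAfter_succ_of_none hσi]
  | some e => rw [remAfter_succ_of_some hσi]; exact Set.sdiff_subset

lemma remAfter_conf_symm (hE : IsES E) (i : ℕ) :
    ∀ a b, (remAfter E σ i).conf a b → (remAfter E σ i).conf b a := by
  induction i with
  | zero => exact hE.conf_symm
  | succ i ih =>
    cases hσi : σ i with
    | none => rwa [remAfter_succ_of_none hσi]
    | some e => rw [remAfter_succ_of_some hσi]; exact remainder_conf_symm ih e

lemma remAfter_mem_of_enab (hE : IsES E) (i : ℕ) :
    ∀ X a, (remAfter E σ i).enab X a → a ∈ (remAfter E σ i).events := by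
  induction i with
  | zero => exact fun X a h => (hE.enab_dom X a h).2.1
  | succ i ih =>
    cases hσi : σ i with
    | none => rwa [remAfter_succ_of_none hσi]
    | some e =>
      rw [remAfter_succ_of_some hσi]
      exact fun X a => remainder_mem_of_enab (remAfter_conf_symm hE i) ih

lemma remAfter_conf_of_conf {a b : Ev} (hab : E.conf a b) (i : ℕ)
    (ha : a ∈ (remAfter E σ i).events) (hb : b ∈ (remAfter E σ i).events) :
    (remAfter E σ i).conf a b := by
  induction i with
  | zero => exact hab
  | succ i ih =>
    cases hσi : σ i with
    | none => rw [remAfter_succ_of_none hσi] at ha hb ⊢; exact ih ha hb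
    | some e =>
      rw [remAfter_succ_of_some hσi] at ha hb ⊢
      exact ⟨ih ha.1 hb.1, ha, hb⟩

end RemAfter

namespace IsPlay

variable {E : LES Ev Act} {σ : ℕ → Option Ev}

lemma mem_remAfter (hE : IsES E) (hσ : IsPlay E σ) {k : ℕ} {e : Ev} (hk : σ k = some e) :
    e ∈ (remAfter E σ k).events :=
  remAfter_mem_of_enab hE k ∅ e (hσ.2 k e hk)

lemma not_conf (hE : IsES E) (hσ : IsPlay E σ) {m k : ℕ} {e d : Ev} (hmk : m < k)
    (hm : σ m = some e) (hk : σ k = some d) : ¬ E.conf e d := by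
  intro hed
  have hd : d ∈ (remAfter E σ (m + 1)).events :=
    remAfter_events_antitone (Nat.succ_le_of_lt hmk) (hσ.mem_remAfter hE hk)
  rw [remAfter_succ_of_some hm] at hd
  exact hd.2 (Or.inr (remAfter_conf_of_conf hed m (hσ.mem_remAfter hE hm) hd.1))

lemma prefixSet_subset_events (hE : IsES E) (hσ : IsPlay E σ) (i : ℕ) :
    prefixSet σ i ⊆ E.events :=
  fun _ ⟨_, _, hk⟩ => remAfter_events_antitone (Nat.zero_le _) (hσ.mem_remAfter hE hk)

lemma cf_prefixSet (hE : IsES E) (hσ : IsPlay E σ) (i : ℕ) : CF E.conf (prefixSet σ i) := by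
  rintro e ⟨m, -, hm⟩ d ⟨k, -, hk⟩ hed
  rcases lt_trichotomy m k with hmk | rfl | hkm
  · exact hσ.not_conf hE hmk hm hk hed
  · obtain rfl : e = d := Option.some_injective _ (hm.symm.trans hk)
    exact hE.conf_irrefl e hed
  · exact hσ.not_conf hE hkm hk hm (hE.conf_symm _ _ hed)

lemma enab_prefixSet_mono (hE : IsES E) (hσ : IsPlay E σ) {i j : ℕ} (hij : i ≤ j) {e : Ev}
    (h : E.enab (prefixSet σ i) e) : E.enab (prefixSet σ j) e :=
  hE.saturated _ _ _ h (prefixSet_mono σ hij) (hσ.prefixSet_subset_events hE j)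
    (prefixSet_finite σ j) (hσ.cf_prefixSet hE j)

lemma exists_validPos_prefixSet_eq (hσ : IsPlay E σ) (i : ℕ) :
    ∃ k ≤ i, validPos σ k ∧ prefixSet σ k = prefixSet σ i ∧ (k < i → σ k = none) := by
  induction i with
  | zero =>
    exact ⟨0, le_rfl, fun _ h => (Nat.not_lt_zero _ h).elim, rfl, fun h => (lt_irrefl 0 h).elim⟩
  | succ i ih =>
    obtain ⟨k, hki, hk, hpre, hend⟩ := ih
    have hpre_succ (hσi : σ i = none) : prefixSet σ (i + 1) = prefixSet σ i := by
      simp [prefixSet_succ, hσi]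
    rcases hki.lt_or_eq with hlt | rfl
    · have hσi : σ i = none := hσ.1 k i hki (hend hlt)
      exact ⟨k, hki.trans i.le_succ, hk, hpre.trans (hpre_succ hσi).symm, fun _ => hend hlt⟩
    · cases hσk : σ k with
      | none => exact ⟨k, k.le_succ, hk, (hpre_succ hσk).symm, fun _ => hσk⟩
      | some e =>
        refine ⟨k + 1, le_rfl, fun m hm => ?_, rfl, fun h => absurd h (lt_irrefl _)⟩
        rcases Nat.lt_succ_iff_lt_or_eq.mp hm with hmk | rfl
        · exact hk m hmk
        · simp [hσk]

end IsPlay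

theorem eager_innocent_general {Ev Act Ppt : Type} (π : Ev → Ppt) (E : LES Ev Act)
    (hE : IsES E) (A : Ppt) (σ : ℕ → Option Ev)
    (hσ : IsPlay E σ)
    (hfair : FairW (eager π E A) σ) :
    Innocent π E A σ := by
  intro i e hA henab
  obtain ⟨k, hki, hk, hpre, hend⟩ := hσ.exists_validPos_prefixSet_eq i
  have hprescribed : ∀ j, k ≤ j → validPos σ j → e ∈ eager π E A (prefixList σ j) := by
    intro j hkj _
    refine ⟨hA, ?_⟩
    rw [← prefixSet_eq_setOf_mem_prefixList]
    exact hσ.enab_prefixSet_mono hE hkj (hpre ▸ henab)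
  obtain ⟨h, hkh, hσh⟩ := hfair k e hk hprescribed
  rcases hki.lt_or_eq with hlt | rfl
  · rw [hσ.1 k h hkh (hend hlt)] at hσh
    exact absurd hσh (Option.some_ne_none e).symm
  · exact ⟨h, hkh, e, hσh, Or.inr rfl⟩

/-- Every fair play conforming to the eager strategy of `A` makes `A` innocent. -/
theorem eager_innocent {Ev Act Ppt : Type} (π : Ev → Ppt) (E : LES Ev Act)
    (hE : IsES E) (A : Ppt) (σ : ℕ → Option Ev)
    (hσ : IsPlay E σ)
    (hconf : Conforms π A (eager π E A) σ)
    (hfair : FairW (eager π E A) σ) :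
    Innocent π E A σ :=
  eager_innocent_general π E hE A σ hσ hfair

end ESC
end

section
/- For the turn-based operational semantics of binary session types, the success-reaching characterization of compliance holds: P ⊣ Q (i.e., every maximal reduction of P ∥ Q in the standard semantics ends with the client equal to ✓) if and only if every maximal turn-based reduction P ∥ Q ⟹* P' ∥ Q' ⟹̸ has P' = 0. -/
/-!
A standard configuration corresponds to a turn-based one when, componentwise, it is an unfolding
of it, a committed branch `ā.p` facing the buffer `[ā]p`, or `✓` facing the `0` left by its
✓-step. This correspondence is a simulation in both directions, up to the explicit unfolding
steps of the standard semantics. Guardedness makes every closed type unfold to a head normal form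
in finitely many steps; on head normal forms a standard step yields a turn-based step, and a
turn-based step yields a standard step unless it is the ✓-step of a component that has already
succeeded. Hence stuck configurations correspond, `✓` on the standard side matching `0` on the
turn-based side.
-/

namespace ESC

open Relation

variable {Act : Type}

theorem WF.mono {n : ℕ} {U : ℕ → Prop} {P : Proc Act} (h : WF n U P) {n' : ℕ} {V : ℕ → Prop}
    (hn : n ≤ n') (hUV : ∀ m < n, U m → V m) : WF n' V P := by
  induction h generalizing n' V with
  | success => exact .success
  | send _ ih => exact .send (ih hn fun _ _ _ => trivial)
  | recv _ ih => exact .recv (ih hn fun _ _ _ => trivial)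
  | ichoice _ _ ih₁ ih₂ => exact .ichoice (ih₁ hn hUV) (ih₂ hn hUV)
  | echoice _ _ ih₁ ih₂ => exact .echoice (ih₁ hn hUV) (ih₂ hn hUV)
  | var hm hU => exact .var (by omega) (hUV _ hm hU)
  | recur _ ih =>
    refine .recur (ih (by omega) ?_)
    rintro m hm ⟨j, rfl, hj⟩
    exact ⟨j, rfl, hUV j (by omega) hj⟩

theorem WF.wf0 {U : ℕ → Prop} {P : Proc Act} (h : WF 0 U P) : WF0 P :=
  h.mono le_rfl fun _ hm _ => absurd hm (Nat.not_lt_zero _)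

theorem WF0.wf {P : Proc Act} (h : WF0 P) {n : ℕ} {U : ℕ → Prop} : WF n U P :=
  h.mono (Nat.zero_le n) fun _ hm _ => absurd hm (Nat.not_lt_zero _)

theorem WF.subst {k : ℕ} {U : ℕ → Prop} {P Q : Proc Act} (h : WF (k + 1) U P) (hQ : WF0 Q) :
    WF k U (subst Q k P) := by
  generalize hn : k + 1 = n at h
  induction h generalizing k with
  | success => exact .success
  | send _ ih => exact .send (ih hn)
  | recv _ ih => exact .recv (ih hn)
  | ichoice _ _ ih₁ ih₂ => exact .ichoice (ih₁ hn) (ih₂ hn)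
  | echoice _ _ ih₁ ih₂ => exact .echoice (ih₁ hn) (ih₂ hn)
  | @var _ _ m hm hU =>
    by_cases hmk : m = k
    · simpa [ESC.subst, hmk] using hQ.wf
    · simpa [ESC.subst, hmk] using WF.var (by omega) hU
  | recur _ ih => exact .recur (ih (by omega))

theorem WF0.unfold {P : Proc Act} (h : WF0 (.recur P)) : WF0 (subst (.recur P) 0 P) := by
  cases id h with
  | recur hP => exact (hP.subst h).wf0

theorem IBr.wf0 {P P' : Proc Act} {a : Act} (h : IBr P a P') (hP : WF0 P) : WF0 P' := by
  induction h with
  | send => cases hP with | send hP => exact hP.wf0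
  | il _ ih => cases hP with | ichoice hP _ => exact ih hP
  | ir _ ih => cases hP with | ichoice _ hP => exact ih hP

theorem EBr.wf0 {P P' : Proc Act} {a : Act} (h : EBr P a P') (hP : WF0 P) : WF0 P' := by
  induction h with
  | recv => cases hP with | recv hP => exact hP.wf0
  | el _ ih => cases hP with | echoice hP _ => exact ih hP
  | er _ ih => cases hP with | echoice _ hP => exact ih hP

theorem IBr.ne_recur {P P' : Proc Act} {a : Act} (h : IBr P a P') (R : Proc Act) :
    P ≠ .recur R := by
  rintro rfl; cases h

theorem EBr.ne_recur {P P' : Proc Act} {a : Act} (h : EBr P a P') (R : Proc Act) :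
    P ≠ .recur R := by
  rintro rfl; cases h

inductive Unfold : Proc Act → Proc Act → Prop
  | recur (P : Proc Act) : Unfold (.recur P) (subst (.recur P) 0 P)

abbrev Unfolds : Proc Act → Proc Act → Prop := ReflTransGen Unfold

theorem WF0.of_unfolds {t s : Proc Act} (ht : WF0 t) (h : Unfolds t s) : WF0 s := by
  induction h with
  | refl => exact ht
  | tail _ hu ih => cases hu; exact ih.unfold

theorem Unfolds.eq_of_ne_recur {t s : Proc Act} (h : Unfolds t s) (ht : ∀ P, t ≠ .recur P) :
    s = t := by
  rcases h.cases_head with rfl | ⟨_, ⟨P⟩, _⟩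
  · rfl
  · exact absurd rfl (ht P)

theorem Unfolds.recur_cases {R s : Proc Act} (h : Unfolds (.recur R) s) :
    s = .recur R ∨ Unfolds (subst (.recur R) 0 R) s := by
  rcases h.cases_head with h | ⟨_, ⟨_⟩, h⟩
  exacts [.inl h.symm, .inr h]

theorem Unfolds.steps_left {t s : Proc Act} (h : Unfolds t s) (u : Proc Act) :
    ReflTransGen Step (t, u) (s, u) := by
  induction h with
  | refl => exact .refl
  | tail _ hu ih => cases hu; exact ih.tail .unfoldL

theorem Unfolds.steps_right {t s : Proc Act} (h : Unfolds t s) (u : Proc Act) :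
    ReflTransGen Step (u, t) (u, s) := by
  induction h with
  | refl => exact .refl
  | tail _ hu ih => cases hu; exact ih.tail .unfoldR

theorem TStep.of_unfolds_left {t s u : Proc Act} {l : Lbl Act} {c : Proc Act × Proc Act}
    (h : Unfolds t s) (hs : TStep (s, u) l c) : TStep (t, u) l c := by
  induction h using ReflTransGen.head_induction_on with
  | refl => exact hs
  | head hu _ ih => cases hu; exact .unfL ih

theorem TStep.of_unfolds_right {t s u : Proc Act} {l : Lbl Act} {c : Proc Act × Proc Act}
    (h : Unfolds t s) (hs : TStep (u, s) l c) : TStep (u, t) l c := by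
  induction h using ReflTransGen.head_induction_on with
  | refl => exact hs
  | head hu _ ih => cases hu; exact .unfR ih

def leadingRecs : Proc Act → ℕ
  | .recur P => leadingRecs P + 1
  | _ => 0

/-- Substituting for variables that only occur guarded does not create leading binders. -/
theorem WF.leadingRecs_subst {n : ℕ} {U : ℕ → Prop} {P : Proc Act} (h : WF n U P)
    (hU : ∀ m, ¬ U m) (Q : Proc Act) (k : ℕ) : leadingRecs (ESC.subst Q k P) = leadingRecs P := by
  induction h generalizing k with
  | var _ hm => exact absurd hm (hU _)
  | recur _ ih =>
    simp only [ESC.subst, leadingRecs]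
    rw [ih (by rintro m ⟨j, rfl, hj⟩; exact hU j hj)]
  | _ => rfl

theorem WF0.exists_unfolds_hnf {t : Proc Act} (ht : WF0 t) :
    ∃ s, Unfolds t s ∧ ∀ P, s ≠ .recur P := by
  induction hn : leadingRecs t generalizing t with
  | zero => exact ⟨t, .refl, by rintro P rfl; simp [leadingRecs] at hn⟩
  | succ n ih =>
    obtain ⟨P, rfl⟩ : ∃ P, t = .recur P := by cases t <;> simp_all [leadingRecs]
    have hrecs : leadingRecs (subst (.recur P) 0 P) = n := by
      cases id ht with
      | recur hP => simpa [hP.leadingRecs_subst (by simp), leadingRecs] using hn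
    obtain ⟨s, hs, hnf⟩ := ih ht.unfold hrecs
    exact ⟨s, .head (.recur P) hs, hnf⟩

/-- `Corr s t`: the standard-semantics component `s` stands for the turn-based component `t`. -/
inductive Corr : Proc Act → Proc Act → Prop
  | unfolds {s t : Proc Act} : WF0 t → Unfolds t s → Corr s t
  | buf {a : Act} {p : Proc Act} : WF0 p → Corr (.comm a p) (.buf a p)
  | tick : Corr .success .zero

namespace Corr

theorem of_wf0 {t : Proc Act} (ht : WF0 t) : Corr t t := .unfolds ht .refl

theorem unfolds_of_iBr {s s' t : Proc Act} {a : Act} (h : Corr s t) (hs : IBr s a s') :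
    WF0 s ∧ Unfolds t s := by
  cases h with
  | unfolds ht hu => exact ⟨ht.of_unfolds hu, hu⟩
  | buf => cases hs
  | tick => cases hs

theorem unfolds_of_eBr {s s' t : Proc Act} {a : Act} (h : Corr s t) (hs : EBr s a s') :
    WF0 s ∧ Unfolds t s := by
  cases h with
  | unfolds ht hu => exact ⟨ht.of_unfolds hu, hu⟩
  | buf => cases hs
  | tick => cases hs

theorem of_comm {a : Act} {p t : Proc Act} (h : Corr (.comm a p) t) : t = .buf a p ∧ WF0 p := by
  cases h with
  | unfolds ht hu => cases ht.of_unfolds hu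
  | buf hp => exact ⟨rfl, hp⟩

theorem of_success {t : Proc Act} (h : Corr .success t) : t = .zero ∨ Unfolds t .success := by
  cases h with
  | unfolds _ hu => exact .inr hu
  | tick => exact .inl rfl

theorem of_iBr_right {s t t' : Proc Act} {a : Act} (h : Corr s t) (ht : IBr t a t') :
    s = t ∧ WF0 t := by
  cases h with
  | unfolds hwf hu => exact ⟨hu.eq_of_ne_recur ht.ne_recur, hwf⟩
  | buf => cases ht
  | tick => cases ht

theorem of_eBr_right {s t t' : Proc Act} {a : Act} (h : Corr s t) (ht : EBr t a t') :
    s = t ∧ WF0 t := by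
  cases h with
  | unfolds hwf hu => exact ⟨hu.eq_of_ne_recur ht.ne_recur, hwf⟩
  | buf => cases ht
  | tick => cases ht

theorem of_buf {s p : Proc Act} {a : Act} (h : Corr s (.buf a p)) : s = .comm a p ∧ WF0 p := by
  cases h with
  | unfolds ht _ => cases ht
  | buf hp => exact ⟨rfl, hp⟩

theorem of_zero {s : Proc Act} (h : Corr s .zero) : s = .success := by
  cases h with
  | unfolds ht _ => cases ht
  | tick => rfl

theorem of_success_right {s : Proc Act} (h : Corr s .success) : s = .success := by
  cases h with
  | unfolds _ hu => exact hu.eq_of_ne_recur (by simp)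

theorem of_recur {s R : Proc Act} (h : Corr s (.recur R)) :
    ∃ s', Unfolds s s' ∧ Corr s' (subst (.recur R) 0 R) := by
  cases h with
  | unfolds ht hu =>
    rcases hu.recur_cases with rfl | hu
    · exact ⟨_, .single (.recur R), .of_wf0 ht.unfold⟩
    · exact ⟨s, .refl, .unfolds ht.unfold hu⟩

theorem exists_hnf {s t : Proc Act} (h : Corr s t) :
    ∃ s', Unfolds s s' ∧ (∀ P, s' ≠ .recur P) ∧ Corr s' t := by
  cases h with
  | unfolds ht hu =>
    obtain ⟨s', hs', hnf⟩ := (ht.of_unfolds hu).exists_unfolds_hnf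
    exact ⟨s', hs', hnf, .unfolds ht (hu.trans hs')⟩
  | buf hp => exact ⟨_, .refl, by simp, .buf hp⟩
  | tick => exact ⟨_, .refl, by simp, .tick⟩

theorem exists_tSteps_zero {s t : Proc Act} (h : Corr s t) (u : Proc Act) :
    ∃ t', ReflTransGen (fun x y => ∃ l, TStep x l y) (u, t) (u, t') ∧ Corr s t' ∧
      (s = .success → t' = .zero) := by
  by_cases hs : s = .success
  · subst hs
    rcases h.of_success with rfl | hu
    · exact ⟨_, .refl, .tick, fun _ => rfl⟩
    · exact ⟨_, .single ⟨_, .of_unfolds_right hu .tickR⟩, .tick, fun _ => rfl⟩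
  · exact ⟨t, .refl, h, fun h => absurd h hs⟩

theorem eq_zero_of_tStuck {t u : Proc Act} (h : Corr .success t)
    (ht : ∀ l c, ¬ TStep (t, u) l c) : t = .zero := by
  rcases h.of_success with rfl | hu
  · rfl
  · exact absurd (.of_unfolds_left hu .tickL) (ht _ _)

end Corr

def CorrConf (x t : Proc Act × Proc Act) : Prop := Corr x.1 t.1 ∧ Corr x.2 t.2

namespace CorrConf

theorem simulate_step {x x' t : Proc Act × Proc Act} (hx : CorrConf x t) (h : Step x x') :
    ∃ t', ReflTransGen (fun x y => ∃ l, TStep x l y) t t' ∧ CorrConf x' t' := by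
  obtain ⟨t₁, t₂⟩ := t
  obtain ⟨h₁, h₂⟩ := hx
  cases h with
  | commitL hbr =>
    obtain ⟨hwf, hu⟩ := h₁.unfolds_of_iBr hbr
    exact ⟨_, .single ⟨_, .of_unfolds_left hu (.outL hbr)⟩, .buf (hbr.wf0 hwf), h₂⟩
  | commitR hbr =>
    obtain ⟨hwf, hu⟩ := h₂.unfolds_of_iBr hbr
    exact ⟨_, .single ⟨_, .of_unfolds_right hu (.outR hbr)⟩, h₁, .buf (hbr.wf0 hwf)⟩
  | unfoldL =>
    cases h₁ with
    | unfolds ht hu => exact ⟨_, .refl, .unfolds ht (hu.tail (.recur _)), h₂⟩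
  | unfoldR =>
    cases h₂ with
    | unfolds ht hu => exact ⟨_, .refl, h₁, .unfolds ht (hu.tail (.recur _))⟩
  | syncL hbr =>
    obtain ⟨rfl, hp⟩ := h₁.of_comm
    obtain ⟨hwf, hu⟩ := h₂.unfolds_of_eBr hbr
    exact ⟨_, .single ⟨_, .of_unfolds_right hu (.inR hbr)⟩, .of_wf0 hp, .of_wf0 (hbr.wf0 hwf)⟩
  | syncR hbr =>
    obtain ⟨rfl, hp⟩ := h₂.of_comm
    obtain ⟨hwf, hu⟩ := h₁.unfolds_of_eBr hbr
    exact ⟨_, .single ⟨_, .of_unfolds_left hu (.inL hbr)⟩, .of_wf0 (hbr.wf0 hwf), .of_wf0 hp⟩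

theorem simulate_tStep {x t t' : Proc Act × Proc Act} {l : Lbl Act} (hx : CorrConf x t)
    (h : TStep t l t') : ∃ x', ReflTransGen Step x x' ∧ CorrConf x' t' := by
  obtain ⟨x₁, x₂⟩ := x
  obtain ⟨h₁, h₂⟩ := hx
  induction h generalizing x₁ x₂ with
  | outL hbr =>
    obtain ⟨rfl, hwf⟩ := h₁.of_iBr_right hbr
    exact ⟨_, .single (.commitL hbr), .buf (hbr.wf0 hwf), h₂⟩
  | outR hbr =>
    obtain ⟨rfl, hwf⟩ := h₂.of_iBr_right hbr
    exact ⟨_, .single (.commitR hbr), h₁, .buf (hbr.wf0 hwf)⟩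
  | inL hbr =>
    obtain ⟨rfl, hp⟩ := h₂.of_buf
    obtain ⟨rfl, hwf⟩ := h₁.of_eBr_right hbr
    exact ⟨_, .single (.syncR hbr), .of_wf0 (hbr.wf0 hwf), .of_wf0 hp⟩
  | inR hbr =>
    obtain ⟨rfl, hp⟩ := h₁.of_buf
    obtain ⟨rfl, hwf⟩ := h₂.of_eBr_right hbr
    exact ⟨_, .single (.syncL hbr), .of_wf0 hp, .of_wf0 (hbr.wf0 hwf)⟩
  | tickL =>
    obtain rfl := h₁.of_success_right
    exact ⟨_, .refl, .tick, h₂⟩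
  | tickR =>
    obtain rfl := h₂.of_success_right
    exact ⟨_, .refl, h₁, .tick⟩
  | unfL _ ih =>
    obtain ⟨s, hs, h₁⟩ := h₁.of_recur
    obtain ⟨x', hx', hc⟩ := ih s x₂ h₁ h₂
    exact ⟨x', (hs.steps_left x₂).trans hx', hc⟩
  | unfR _ ih =>
    obtain ⟨s, hs, h₂⟩ := h₂.of_recur
    obtain ⟨x', hx', hc⟩ := ih x₁ s h₁ h₂
    exact ⟨x', (hs.steps_right x₁).trans hx', hc⟩

theorem simulate_steps {x y t : Proc Act × Proc Act} (hx : CorrConf x t)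
    (h : ReflTransGen Step x y) :
    ∃ t', ReflTransGen (fun x y => ∃ l, TStep x l y) t t' ∧ CorrConf y t' := by
  induction h with
  | refl => exact ⟨t, .refl, hx⟩
  | tail _ hs ih =>
    obtain ⟨t', ht, hy⟩ := ih
    obtain ⟨t'', ht', hz⟩ := hy.simulate_step hs
    exact ⟨t'', ht.trans ht', hz⟩

theorem simulate_tSteps {x t t' : Proc Act × Proc Act} (hx : CorrConf x t)
    (h : ReflTransGen (fun x y => ∃ l, TStep x l y) t t') :
    ∃ x', ReflTransGen Step x x' ∧ CorrConf x' t' := by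
  induction h with
  | refl => exact ⟨x, .refl, hx⟩
  | tail _ hs ih =>
    obtain ⟨x', hx', hc⟩ := ih
    obtain ⟨x'', hx'', hc'⟩ := hc.simulate_tStep hs.choose_spec
    exact ⟨x'', hx'.trans hx'', hc'⟩

theorem stuck_of_tStuck {x t : Proc Act × Proc Act} (hx : CorrConf x t)
    (hnf₁ : ∀ P, x.1 ≠ .recur P) (hnf₂ : ∀ P, x.2 ≠ .recur P) (ht : ∀ l c, ¬ TStep t l c) :
    Stuck x := by
  obtain ⟨t₁, t₂⟩ := t
  obtain ⟨h₁, h₂⟩ := hx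
  intro y h
  cases h with
  | commitL hbr => exact ht _ _ (.of_unfolds_left (h₁.unfolds_of_iBr hbr).2 (.outL hbr))
  | commitR hbr => exact ht _ _ (.of_unfolds_right (h₂.unfolds_of_iBr hbr).2 (.outR hbr))
  | unfoldL => exact hnf₁ _ rfl
  | unfoldR => exact hnf₂ _ rfl
  | syncL hbr =>
    obtain ⟨rfl, -⟩ := h₁.of_comm
    exact ht _ _ (.of_unfolds_right (h₂.unfolds_of_eBr hbr).2 (.inR hbr))
  | syncR hbr =>
    obtain ⟨rfl, -⟩ := h₂.of_comm
    exact ht _ _ (.of_unfolds_left (h₁.unfolds_of_eBr hbr).2 (.inL hbr))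

theorem progress {x t t' : Proc Act × Proc Act} {l : Lbl Act} (hx : CorrConf x t)
    (h : TStep t l t') :
    (∃ y, Step x y) ∨ (x.1 = .success ∧ t.1 ≠ .zero) ∨ (x.2 = .success ∧ t.2 ≠ .zero) := by
  obtain ⟨x₁, x₂⟩ := x
  obtain ⟨h₁, h₂⟩ := hx
  induction h generalizing x₁ x₂ with
  | outL hbr =>
    obtain ⟨rfl, -⟩ := h₁.of_iBr_right hbr
    exact .inl ⟨_, .commitL hbr⟩
  | outR hbr =>
    obtain ⟨rfl, -⟩ := h₂.of_iBr_right hbr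
    exact .inl ⟨_, .commitR hbr⟩
  | inL hbr =>
    obtain ⟨rfl, -⟩ := h₂.of_buf
    obtain ⟨rfl, -⟩ := h₁.of_eBr_right hbr
    exact .inl ⟨_, .syncR hbr⟩
  | inR hbr =>
    obtain ⟨rfl, -⟩ := h₁.of_buf
    obtain ⟨rfl, -⟩ := h₂.of_eBr_right hbr
    exact .inl ⟨_, .syncL hbr⟩
  | tickL => exact .inr (.inl ⟨h₁.of_success_right, by simp⟩)
  | tickR => exact .inr (.inr ⟨h₂.of_success_right, by simp⟩)
  | unfL _ ih =>
    obtain ⟨s, hs, h₁⟩ := h₁.of_recur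
    rcases hs.cases_head with rfl | ⟨_, ⟨_⟩, _⟩
    · rcases ih x₁ x₂ h₁ h₂ with h | ⟨h, -⟩ | h
      exacts [.inl h, .inr (.inl ⟨h, by simp⟩), .inr (.inr h)]
    · exact .inl ⟨_, .unfoldL⟩
  | unfR _ ih =>
    obtain ⟨s, hs, h₂⟩ := h₂.of_recur
    rcases hs.cases_head with rfl | ⟨_, ⟨_⟩, _⟩
    · rcases ih x₁ x₂ h₁ h₂ with h | h | ⟨h, -⟩
      exacts [.inl h, .inr (.inl h), .inr (.inr ⟨h, by simp⟩)]
    · exact .inl ⟨_, .unfoldR⟩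

end CorrConf

/-- Compliance is characterized by the turn-based semantics: `P ⊣ Q` iff every
maximal turn-based reduction of `P ∥ Q` ends with the client equal to `0`. -/
theorem compliance_iff_turnBased {Act : Type} (P Q : Proc Act)
    (hP : WF0 P) (hQ : WF0 Q) :
    Compliant P Q ↔
      ∀ c, Relation.ReflTransGen (fun x y => ∃ l, TStep x l y) (P, Q) c →
        (∀ l c', ¬ TStep c l c') → c.1 = Proc.zero := by
  have hPQ : CorrConf (P, Q) (P, Q) := ⟨.of_wf0 hP, .of_wf0 hQ⟩
  constructor
  · intro hcomp τ hτ hstuck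
    obtain ⟨⟨c₁, c₂⟩, hc, h₁, h₂⟩ := hPQ.simulate_tSteps hτ
    obtain ⟨u₁, hu₁, hnf₁, h₁⟩ := h₁.exists_hnf
    obtain ⟨u₂, hu₂, hnf₂, h₂⟩ := h₂.exists_hnf
    have hu : ReflTransGen Step (P, Q) (u₁, u₂) :=
      hc.trans ((hu₁.steps_left c₂).trans (hu₂.steps_right u₁))
    have hsucc := hcomp _ hu (CorrConf.stuck_of_tStuck ⟨h₁, h₂⟩ hnf₁ hnf₂ hstuck)
    exact Corr.eq_zero_of_tStuck (hsucc ▸ h₁) hstuck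
  · intro hT c hc hstuck
    obtain ⟨τ, hτ, h₁, h₂⟩ := hPQ.simulate_steps hc
    obtain ⟨τ₂, hτ₂, h₂, hzero⟩ := h₂.exists_tSteps_zero τ.1
    by_cases hτ' : ∃ l c', TStep (τ.1, τ₂) l c'
    · obtain ⟨l, c', hstep⟩ := hτ'
      rcases CorrConf.progress (t := (τ.1, τ₂)) ⟨h₁, h₂⟩ hstep with
        ⟨y, hy⟩ | ⟨hsucc, -⟩ | ⟨hsucc, hne⟩
      · exact absurd hy (hstuck y)
      · exact hsucc
      · exact absurd (hzero hsucc) hne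
    · have hτ'₁ := hT _ (hτ.trans hτ₂) fun l c' h => hτ' ⟨l, c', h⟩
      exact (hτ'₁ ▸ h₁).of_zero

end ESC
end
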